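/- The Lie bracket on ℝ^9 = ℝ^3 ⊕ ℝ^3 ⊕ ℝ^3 defined by [(y,x,z),(y',x',z')] = (y∧y', y∧x' − y'∧x, y∧z' − y'∧z + x∧x') satisfies the Jacobi identity, and the subspace {(0,x,z)} is a Lie subalgebra that is not abelian while the subspace {(0,0,z)} is an abelian ideal. -/

import Mathlib

open Matrix

noncomputable section

/-- The Lie bracket of `g^(3)` on `ℝ⁹ = ℝ³ ⊕ ℝ³ ⊕ ℝ³`:
`[(y,x,z),(y',x',z')] = (y∧y', y∧x' − y'∧x, y∧z' − y'∧z + x∧x')`. -/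
def g3Bracket (u v : (Fin 3 → ℝ) × (Fin 3 → ℝ) × (Fin 3 → ℝ)) :
    (Fin 3 → ℝ) × (Fin 3 → ℝ) × (Fin 3 → ℝ) :=
  (u.1 ⨯₃ v.1,
   u.1 ⨯₃ v.2.1 - v.1 ⨯₃ u.2.1,
   u.1 ⨯₃ v.2.2 - v.1 ⨯₃ u.2.2 + u.2.1 ⨯₃ v.2.1)

set_option maxHeartbeats 1000000 in
lemma g3_jacobi (u v w : (Fin 3 → ℝ) × (Fin 3 → ℝ) × (Fin 3 → ℝ)) :
      g3Bracket (g3Bracket u v) w + g3Bracket (g3Bracket v w) u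
        + g3Bracket (g3Bracket w u) v = 0 := by
  obtain ⟨a,b,c⟩ := u; obtain ⟨d,e,f⟩ := v; obtain ⟨g,h,k⟩ := w
  refine Prod.ext ?_ (Prod.ext ?_ ?_) <;>
  · show _ = (0 : Fin 3 → ℝ)
    funext i
    fin_cases i <;>
    · simp [g3Bracket, crossProduct]
      ring

/-- The bracket satisfies the Jacobi identity; the subspace `{(0,x,z)}` is a Lie
subalgebra which is not abelian, while the subspace `{(0,0,z)}` is an abelian
ideal. -/
theorem stmt3 :
    (∀ u v w : (Fin 3 → ℝ) × (Fin 3 → ℝ) × (Fin 3 → ℝ),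
      g3Bracket (g3Bracket u v) w + g3Bracket (g3Bracket v w) u
        + g3Bracket (g3Bracket w u) v = 0) ∧
    (∀ u v, u.1 = 0 → v.1 = 0 → (g3Bracket u v).1 = 0) ∧
    (∃ u v, u.1 = 0 ∧ v.1 = 0 ∧ g3Bracket u v ≠ 0) ∧
    (∀ u v, v.1 = 0 → v.2.1 = 0 → (g3Bracket u v).1 = 0 ∧ (g3Bracket u v).2.1 = 0) ∧
    (∀ u v, u.1 = 0 → u.2.1 = 0 → v.1 = 0 → v.2.1 = 0 → g3Bracket u v = 0) := by
  refine ⟨g3_jacobi, ?_, ?_, ?_, ?_⟩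
  · intro u v hu hv
    simp [g3Bracket, hu]
  · refine ⟨(0, ![1,0,0], 0), (0, ![0,1,0], 0), rfl, rfl, fun h => ?_⟩
    have h2 := congrFun (congrArg (fun p => p.2.2) h) 2
    simp [g3Bracket, crossProduct] at h2
  · intro u v hv1 hv2
    constructor
    · simp [g3Bracket, hv1]
    · simp [g3Bracket, hv1, hv2]
  · intro u v hu1 hu2 hv1 hv2
    refine Prod.ext ?_ (Prod.ext ?_ ?_) <;> simp [g3Bracket, hu1, hu2, hv1, hv2]
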